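/- Let c ∈ [0,1) and s = √(1−c²). Then f(0) = s⁸/16 > 0 and f(−(1−c)²) < 0; consequently f has a zero in the open interval (−(1−c)², 0). Here f(x) = (1/16)·( ((σ_3/64)x² + (c/4)x − s²)² − (1/16)(1 − σ_2 + 2σ_3)c²x² + (1/16)(2 − σ_1)x² − c(x − 8c) )² − (64 + u_1²u_2²u_3²x²)·( x/32 − c/8 − c³/8 + (σ_3/512)c x² )², where u_1 = √(2(2+√2)) − 1 − √2, u_2 = √(2+√2) − 1, u_3 = 1 + √2 − √(2+√2), σ_1 = (1−u_1²)+(1−u_2²)+(1−u_3²), σ_2 = (1−u_1²)(1−u_2²)+(1−u_1²)(1−u_3²)+(1−u_2²)(1−u_3²), σ_3 = (1−u_1²)(1−u_2²)(1−u_3²). -/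

import Mathlib

open Real

noncomputable def u1 : ℝ := Real.sqrt (2 * (2 + Real.sqrt 2)) - 1 - Real.sqrt 2

noncomputable def u2 : ℝ := Real.sqrt (2 + Real.sqrt 2) - 1

noncomputable def u3 : ℝ := 1 + Real.sqrt 2 - Real.sqrt (2 + Real.sqrt 2)

noncomputable def σ1 : ℝ := (1 - u1 ^ 2) + (1 - u2 ^ 2) + (1 - u3 ^ 2)

noncomputable def σ2 : ℝ :=
  (1 - u1 ^ 2) * (1 - u2 ^ 2) + (1 - u1 ^ 2) * (1 - u3 ^ 2) + (1 - u2 ^ 2) * (1 - u3 ^ 2)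

noncomputable def σ3 : ℝ := (1 - u1 ^ 2) * (1 - u2 ^ 2) * (1 - u3 ^ 2)

/-- The resolvent function `f` of the quartic G⁰ interpolation problem
(equation (6) of the paper). -/
noncomputable def quarticF (c s x : ℝ) : ℝ :=
  (1 / 16) * (((σ3 / 64) * x ^ 2 + (c / 4) * x - s ^ 2) ^ 2
      - (1 / 16) * (1 - σ2 + 2 * σ3) * c ^ 2 * x ^ 2
      + (1 / 16) * (2 - σ1) * x ^ 2 - c * (x - 8 * c)) ^ 2
    - (64 + u1 ^ 2 * u2 ^ 2 * u3 ^ 2 * x ^ 2)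
      * (x / 32 - c / 8 - c ^ 3 / 8 + (σ3 / 512) * c * x ^ 2) ^ 2

/-!
Write `f = A²/16 − (64 + P x²) B²`. At `x = 0` this is `((s⁴ + 8c²)² − 16c²(1 + c²)²)/16`,
a difference of squares equal to `(1 − c²)⁴/16 = s⁸/16`. At `x = −(1 − c)²` one has `0 ≤ A`, and
`A`, `B` are monotone in the constants `1 − σ₂ + 2σ₃ ∈ [0, 1]`, `2 − σ₁ ∈ [0, 1/12]` and
`σ₃ ∈ [9/50, 1/4]` (read off from four-digit enclosures of `u₁, u₂, u₃`). At the extreme values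
`A + 32B` is `−(1 − c)⁴` times a quartic in `c` with positive Bernstein coefficients, so
`0 ≤ A < −32B` and `A² < 1024 B² ≤ 16 (64 + P x²) B²`. The zero comes from the intermediate
value theorem.
-/

noncomputable def resolventA (k₁ k₂ σ c s x : ℝ) : ℝ :=
  ((σ / 64) * x ^ 2 + (c / 4) * x - s ^ 2) ^ 2 - (1 / 16) * k₁ * c ^ 2 * x ^ 2
    + (1 / 16) * k₂ * x ^ 2 - c * (x - 8 * c)

noncomputable def resolventB (σ c x : ℝ) : ℝ := x / 32 - c / 8 - c ^ 3 / 8 + (σ / 512) * c * x ^ 2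

noncomputable def quarticResolvent (k₁ k₂ σ p c s x : ℝ) : ℝ :=
  (1 / 16) * resolventA k₁ k₂ σ c s x ^ 2 - (64 + p * x ^ 2) * resolventB σ c x ^ 2

theorem quarticF_eq_quarticResolvent (c s x : ℝ) :
    quarticF c s x =
      quarticResolvent (1 - σ2 + 2 * σ3) (2 - σ1) σ3 (u1 ^ 2 * u2 ^ 2 * u3 ^ 2) c s x :=
  rfl

theorem quarticResolvent_zero (k₁ k₂ σ p : ℝ) {c s : ℝ} (hs : s ^ 2 = 1 - c ^ 2) :
    quarticResolvent k₁ k₂ σ p c s 0 = s ^ 8 / 16 := by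
  simp only [quarticResolvent, resolventA, resolventB]
  linear_combination (c ^ 2 + c ^ 2 * s ^ 2 - c ^ 4) * hs

theorem resolventA_nonneg {k₁ k₂ σ c s x : ℝ} (hk₁ : k₁ * x ^ 2 ≤ 128) (hk₂ : 0 ≤ k₂)
    (hc : 0 ≤ c) (hx : x ≤ 0) : 0 ≤ resolventA k₁ k₂ σ c s x := by
  unfold resolventA
  nlinarith [sq_nonneg ((σ / 64) * x ^ 2 + (c / 4) * x - s ^ 2), mul_nonneg hk₂ (sq_nonneg x),
    mul_nonneg hc (neg_nonneg.mpr hx), mul_le_mul_of_nonneg_left hk₁ (sq_nonneg c)]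

theorem resolventA_le_resolventA {k₁ k₂ σ k₁' k₂' σ' c s x : ℝ} (hk₁ : k₁' ≤ k₁)
    (hk₂ : k₂ ≤ k₂') (hσ : σ' ≤ σ) (hQ : (σ / 64) * x ^ 2 + (c / 4) * x - s ^ 2 ≤ 0) :
    resolventA k₁ k₂ σ c s x ≤ resolventA k₁' k₂' σ' c s x := by
  have hQ' : (σ' / 64) * x ^ 2 + (c / 4) * x - s ^ 2 ≤
      (σ / 64) * x ^ 2 + (c / 4) * x - s ^ 2 := by
    nlinarith [sq_nonneg x]
  unfold resolventA
  nlinarith [mul_le_mul_of_nonneg_right hk₁ (sq_nonneg (c * x)),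
    mul_le_mul_of_nonneg_right hk₂ (sq_nonneg x)]

theorem resolventB_le_resolventB {σ σ' c x : ℝ} (hσ : σ ≤ σ') (hc : 0 ≤ c) :
    resolventB σ c x ≤ resolventB σ' c x := by
  unfold resolventB
  nlinarith [mul_nonneg hc (sq_nonneg x)]

theorem resolventA_lt_neg_mul_resolventB {c s : ℝ} (hc : c ∈ Set.Ico 0 1)
    (hs : s ^ 2 = 1 - c ^ 2) :
    resolventA 0 (1 / 12) (9 / 50) c s (-(1 - c) ^ 2) <
      -32 * resolventB (1 / 4) c (-(1 - c) ^ 2) := by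
  have hc0 : 0 ≤ c := hc.1
  have ht : 0 < 1 - c := sub_pos.mpr hc.2
  rw [← sub_pos]
  -- The constant term is the value at `c = 0`, where the bounds on the constants are nearly sharp.
  convert_to 0 < (1 - c) ^ 4 * (12557 / 30720000 * (1 - c) ^ 4 + 9359 / 19200 * c * (1 - c) ^ 3
      + 8889 / 6400 * c ^ 2 * (1 - c) ^ 2 + 6329 / 4800 * c ^ 3 * (1 - c) + 5 / 12 * c ^ 4) using 1
  · simp only [resolventA, resolventB, hs]
    ring
  positivity

theorem quarticResolvent_neg {k₁ k₂ σ p c s : ℝ} (hk₁ : k₁ ∈ Set.Icc 0 1)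
    (hk₂ : k₂ ∈ Set.Icc 0 (1 / 12)) (hσ : σ ∈ Set.Icc (9 / 50) (1 / 4)) (hp : 0 ≤ p)
    (hc : c ∈ Set.Ico 0 1) (hs : s ^ 2 = 1 - c ^ 2) :
    quarticResolvent k₁ k₂ σ p c s (-(1 - c) ^ 2) < 0 := by
  obtain ⟨hc0, hc1⟩ := hc
  set x := -(1 - c) ^ 2
  have hx_mem : x ∈ Set.Icc (-1) 0 := ⟨by nlinarith, by nlinarith⟩
  have hA_nonneg : 0 ≤ resolventA k₁ k₂ σ c s x :=
    resolventA_nonneg (by nlinarith [hk₁.2, hx_mem.1, hx_mem.2]) hk₂.1 hc0 hx_mem.2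
  have hQ : (σ / 64) * x ^ 2 + (c / 4) * x - s ^ 2 ≤ 0 := by
    rw [hs]; nlinarith [hσ.2, hx_mem.1, hx_mem.2]
  have hA_lt : resolventA k₁ k₂ σ c s x < -32 * resolventB σ c x :=
    calc resolventA k₁ k₂ σ c s x ≤ resolventA 0 (1 / 12) (9 / 50) c s x :=
          resolventA_le_resolventA hk₁.1 hk₂.2 hσ.1 hQ
      _ < -32 * resolventB (1 / 4) c x := resolventA_lt_neg_mul_resolventB ⟨hc0, hc1⟩ hs
      _ ≤ -32 * resolventB σ c x := by linarith [resolventB_le_resolventB hσ.2 hc0 (x := x)]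
  have hsq : resolventA k₁ k₂ σ c s x ^ 2 < (-32 * resolventB σ c x) ^ 2 :=
    pow_lt_pow_left₀ hA_lt hA_nonneg two_ne_zero
  unfold quarticResolvent
  nlinarith [mul_nonneg (mul_nonneg hp (sq_nonneg x)) (sq_nonneg (resolventB σ c x))]

theorem one_sub_esymm_two_add_two_esymm_three_mem {a b c : ℝ} (ha : a ∈ Set.Icc 0 1)
    (hb : b ∈ Set.Icc 0 1) (hc : c ∈ Set.Icc 0 1) :
    1 - (a * b + a * c + b * c) + 2 * (a * b * c) ∈ Set.Icc 0 1 := by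
  obtain ⟨ha0, ha1⟩ := ha
  obtain ⟨hb0, hb1⟩ := hb
  obtain ⟨hc0, hc1⟩ := hc
  constructor
  · have h : 1 - (a * b + a * c + b * c) + 2 * (a * b * c) = (1 - a) * (1 - b) * (1 - c)
        + a * (1 - b) * (1 - c) + (1 - a) * b * (1 - c) + (1 - a) * (1 - b) * c := by ring
    rw [h]
    have := sub_nonneg.mpr ha1; have := sub_nonneg.mpr hb1; have := sub_nonneg.mpr hc1
    positivity
  · nlinarith [mul_nonneg (mul_nonneg ha0 hb0) (sub_nonneg.mpr hc1),
      mul_nonneg (mul_nonneg ha0 hc0) (sub_nonneg.mpr hb1), mul_nonneg hb0 hc0]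

theorem sqrt_two_mem : √2 ∈ Set.Ioo 1.4142 1.4143 :=
  ⟨(Real.lt_sqrt (by norm_num)).mpr (by norm_num), (Real.sqrt_lt' (by norm_num)).mpr (by norm_num)⟩

theorem sqrt_two_add_sqrt_two_mem : √(2 + √2) ∈ Set.Ioo 1.8477 1.8478 := by
  obtain ⟨h₁, h₂⟩ := sqrt_two_mem
  exact ⟨(Real.lt_sqrt (by norm_num)).mpr (by norm_num; linarith),
    (Real.sqrt_lt' (by norm_num)).mpr (by norm_num; linarith)⟩

theorem sqrt_two_mul_two_add_sqrt_two_mem : √(2 * (2 + √2)) ∈ Set.Ioo 2.6131 2.6132 := by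
  obtain ⟨h₁, h₂⟩ := sqrt_two_mem
  exact ⟨(Real.lt_sqrt (by norm_num)).mpr (by norm_num; linarith),
    (Real.sqrt_lt' (by norm_num)).mpr (by norm_num; linarith)⟩

theorem u1_mem : u1 ∈ Set.Ioo 0.1988 0.199 := by
  obtain ⟨h₁, h₂⟩ := sqrt_two_mem
  obtain ⟨h₃, h₄⟩ := sqrt_two_mul_two_add_sqrt_two_mem
  exact ⟨by unfold u1; linarith, by unfold u1; linarith⟩

theorem u2_mem : u2 ∈ Set.Ioo 0.8477 0.8478 := by
  obtain ⟨h₁, h₂⟩ := sqrt_two_add_sqrt_two_mem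
  exact ⟨by unfold u2; linarith, by unfold u2; linarith⟩

theorem u3_mem : u3 ∈ Set.Ioo 0.5664 0.5666 := by
  obtain ⟨h₁, h₂⟩ := sqrt_two_mem
  obtain ⟨h₃, h₄⟩ := sqrt_two_add_sqrt_two_mem
  exact ⟨by unfold u3; linarith, by unfold u3; linarith⟩

theorem one_sub_sq_mem_Icc {u l h : ℝ} (hu : u ∈ Set.Ioo l h) (hl : 0 ≤ l) :
    1 - u ^ 2 ∈ Set.Icc (1 - h ^ 2) (1 - l ^ 2) :=
  ⟨by nlinarith [hu.1, hu.2], by nlinarith [hu.1, hu.2]⟩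

theorem one_sub_u1_sq_mem : 1 - u1 ^ 2 ∈ Set.Icc 0.96 1 := by
  have := one_sub_sq_mem_Icc u1_mem (by norm_num)
  norm_num at this ⊢
  constructor <;> linarith [this.1, this.2]

theorem one_sub_u2_sq_mem : 1 - u2 ^ 2 ∈ Set.Icc 0.2812 0.2815 := by
  have := one_sub_sq_mem_Icc u2_mem (by norm_num)
  norm_num at this ⊢
  constructor <;> linarith [this.1, this.2]

theorem one_sub_u3_sq_mem : 1 - u3 ^ 2 ∈ Set.Icc 0.6789 0.68 := by
  have := one_sub_sq_mem_Icc u3_mem (by norm_num)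
  norm_num at this ⊢
  constructor <;> linarith [this.1, this.2]

theorem one_sub_σ2_add_two_σ3_mem : 1 - σ2 + 2 * σ3 ∈ Set.Icc 0 1 := by
  obtain ⟨h₁, h₂⟩ := one_sub_u1_sq_mem
  obtain ⟨h₃, h₄⟩ := one_sub_u2_sq_mem
  obtain ⟨h₅, h₆⟩ := one_sub_u3_sq_mem
  exact one_sub_esymm_two_add_two_esymm_three_mem ⟨by linarith, h₂⟩ ⟨by linarith, by linarith⟩
    ⟨by linarith, by linarith⟩

theorem two_sub_σ1_mem : 2 - σ1 ∈ Set.Icc 0 (1 / 12) := by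
  obtain ⟨h₁, h₂⟩ := one_sub_u1_sq_mem
  obtain ⟨h₃, h₄⟩ := one_sub_u2_sq_mem
  obtain ⟨h₅, h₆⟩ := one_sub_u3_sq_mem
  unfold σ1
  constructor <;> linarith

theorem σ3_mem : σ3 ∈ Set.Icc (9 / 50) (1 / 4) := by
  obtain ⟨h₁, h₂⟩ := one_sub_u1_sq_mem
  obtain ⟨h₃, h₄⟩ := one_sub_u2_sq_mem
  obtain ⟨h₅, h₆⟩ := one_sub_u3_sq_mem
  unfold σ3
  constructor
  · calc (9 / 50 : ℝ) ≤ 0.96 * 0.2812 * 0.6789 := by norm_num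
      _ ≤ _ := mul_le_mul (mul_le_mul h₁ h₃ (by norm_num) (by linarith)) h₅ (by norm_num)
          (mul_nonneg (by linarith) (by linarith))
  · calc _ ≤ (1 : ℝ) * 0.2815 * 0.68 :=
          mul_le_mul (mul_le_mul h₂ h₄ (by linarith) (by norm_num)) h₆ (by linarith) (by norm_num)
      _ ≤ 1 / 4 := by norm_num

/-- Lemma 2 of the paper: `f(0) = s⁸/16 > 0`, `f(−(1−c)²) < 0`, hence `f` has a zero in
`(−(1−c)², 0)`. -/
theorem stmt_13 (c : ℝ) (hc : c ∈ Set.Ico (0 : ℝ) 1) (s : ℝ)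
    (hs : s = Real.sqrt (1 - c ^ 2)) :
    quarticF c s 0 = s ^ 8 / 16 ∧ 0 < quarticF c s 0 ∧
      quarticF c s (-(1 - c) ^ 2) < 0 ∧
      ∃ x ∈ Set.Ioo (-(1 - c) ^ 2) (0 : ℝ), quarticF c s x = 0 := by
  have h1c : 0 < 1 - c ^ 2 := by nlinarith [hc.1, hc.2]
  have hs2 : s ^ 2 = 1 - c ^ 2 := hs ▸ Real.sq_sqrt h1c.le
  have hs0 : 0 < s := hs ▸ Real.sqrt_pos.mpr h1c
  have hzero : quarticF c s 0 = s ^ 8 / 16 := by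
    rw [quarticF_eq_quarticResolvent]; exact quarticResolvent_zero _ _ _ _ hs2
  have hpos : 0 < quarticF c s 0 := hzero ▸ by positivity
  have hneg : quarticF c s (-(1 - c) ^ 2) < 0 := by
    rw [quarticF_eq_quarticResolvent]
    exact quarticResolvent_neg one_sub_σ2_add_two_σ3_mem two_sub_σ1_mem σ3_mem (by positivity)
      hc hs2
  have hcont : Continuous (quarticF c s) := by unfold quarticF; fun_prop
  refine ⟨hzero, hpos, hneg, ?_⟩
  exact intermediate_value_Ioo (by nlinarith [hc.2]) hcont.continuousOn ⟨hneg, hpos⟩
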